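/- arXiv:math/9906145 — 3 statements merged into one kernel-verified Lean document; each statement's English description precedes it below -/
import Mathlib

section
/- Suppose p1 > 0 and p2 - p1^2 > 0. If real numbers a0, a1 satisfy 4*p1^2*a0 + p1^2*a1^2 - 2*p1*p2*a0*a1 - 2*p1*a1 - 2*p2*a0 + p2^2*a0^2 + 1 < 0, then a0 > 0 and a1 > 0. -/
/-!
Completing the square in two ways,
`Δ = (p₁a₁ - p₂a₀ - 1)² - 4(p₂ - p₁²)a₀ = (p₂a₀ + p₁a₁ - 1)² + 4p₁a₀(p₁ - p₂a₁)`,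
so `Δ < 0` forces first `a₀ > 0` (as `p₂ > p₁²`) and then `p₂a₁ > p₁ > 0`, hence `a₁ > 0`.
-/

/-- The discriminant-type expression `Δ` of the CLF design condition. -/
def clfDiscriminant (a0 a1 p1 p2 : ℝ) : ℝ :=
  4*p1^2*a0 + p1^2*a1^2 - 2*p1*p2*a0*a1 - 2*p1*a1 - 2*p2*a0 + p2^2*a0^2 + 1

lemma clfDiscriminant_eq_sq_sub (a0 a1 p1 p2 : ℝ) :
    clfDiscriminant a0 a1 p1 p2 = (p1*a1 - p2*a0 - 1)^2 - 4*(p2 - p1^2)*a0 := by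
  unfold clfDiscriminant; ring

lemma clfDiscriminant_eq_sq_add (a0 a1 p1 p2 : ℝ) :
    clfDiscriminant a0 a1 p1 p2 = (p2*a0 + p1*a1 - 1)^2 + 4*p1*a0*(p1 - p2*a1) := by
  unfold clfDiscriminant; ring

lemma pos_of_clfDiscriminant_neg {a0 a1 p1 p2 : ℝ} (hp : 0 < p2 - p1^2)
    (h : clfDiscriminant a0 a1 p1 p2 < 0) : 0 < a0 := by
  rw [clfDiscriminant_eq_sq_sub] at h
  have : 0 < (p2 - p1^2) * a0 := by nlinarith [sq_nonneg (p1*a1 - p2*a0 - 1)]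
  exact pos_of_mul_pos_right this hp.le

lemma lt_mul_of_clfDiscriminant_neg {a0 a1 p1 p2 : ℝ} (hp1 : 0 < p1) (ha0 : 0 < a0)
    (h : clfDiscriminant a0 a1 p1 p2 < 0) : p1 < p2 * a1 := by
  rw [clfDiscriminant_eq_sq_add] at h
  have : p1 * a0 * (p1 - p2*a1) < 0 := by nlinarith [sq_nonneg (p2*a0 + p1*a1 - 1)]
  linarith [neg_of_mul_neg_right this (mul_pos hp1 ha0).le]

theorem stmt_3 (a0 a1 p1 p2 : ℝ) (hp1 : p1 > 0) (hp : p2 - p1^2 > 0)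
    (h : 4*p1^2*a0 + p1^2*a1^2 - 2*p1*p2*a0*a1 - 2*p1*a1 - 2*p2*a0 + p2^2*a0^2 + 1 < 0) :
    a0 > 0 ∧ a1 > 0 := by
  have ha0 : 0 < a0 := pos_of_clfDiscriminant_neg hp h
  have hp2 : 0 < p2 := by nlinarith
  have ha1 : p1 < p2 * a1 := lt_mul_of_clfDiscriminant_neg hp1 ha0 h
  exact ⟨ha0, pos_of_mul_pos_right (hp1.trans ha1) hp2.le⟩
end

section
/- Suppose a0 > 0 and a1 > 0. Then there exist real numbers p1 > 0 and p2 with p2 - p1^2 > 0 such that ((a1*p1 - a0*p2) - 1)^2 + 4*a0*(p1^2 - p2) < 0. -/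
theorem stmt_6 (a0 a1 : ℝ) (ha0 : a0 > 0) (ha1 : a1 > 0) :
    ∃ p1 p2 : ℝ, p1 > 0 ∧ p2 - p1^2 > 0 ∧
      ((a1*p1 - a0*p2) - 1)^2 + 4*a0*(p1^2 - p2) < 0 := by
  set p1 : ℝ := min (a1/(2*a0)) (1/a1) with hp1def
  refine ⟨p1, p1^2 + 1/a0, ?_, ?_, ?_⟩
  · exact lt_min (by positivity) (by positivity)
  · have : (0:ℝ) < 1/a0 := by positivity
    linarith
  · have hp1pos : 0 < p1 := lt_min (by positivity) (by positivity)
    have h1 : p1 ≤ a1/(2*a0) := min_le_left _ _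
    have h2 : p1 ≤ 1/a1 := min_le_right _ _
    have hu1 : a0 * p1 ≤ a1/2 := by
      have := mul_le_mul_of_nonneg_left h1 ha0.le
      have he : a0 * (a1 / (2 * a0)) = a1/2 := by field_simp
      linarith [he ▸ this]
    have hu2 : p1 * a1 ≤ 1 := by
      rw [← le_div_iff₀ ha1]; exact h2
    have hupos : 0 < p1 * (a1 - a0 * p1) := by nlinarith
    have hule : p1 * (a1 - a0 * p1) ≤ 1 := by nlinarith
    have ha0inv : a0 * (1/a0) = 1 := mul_one_div_cancel ha0.ne'
    nlinarith [sq_nonneg (p1 * (a1 - a0 * p1))]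
end

section
/- If a0 ≤ 0 or a1 ≤ 0, then there are no real numbers p1 > 0 and p2 with p2 - p1^2 > 0 satisfying 4*p1^2*a0 + p1^2*a1^2 - 2*p1*p2*a0*a1 - 2*p1*a1 - 2*p2*a0 + p2^2*a0^2 + 1 < 0. -/
/-!
The left-hand side of the design condition can be completed to a square in two ways:
it equals `(p1 a1 - p2 a0 - 1)^2 - 4 a0 (p2 - p1^2)` and `(p1 a1 + p2 a0 - 1)^2 + 4 a0 p1 (p1 - p2 a1)`.
For `a0 ≤ 0` the first form is nonnegative because `p2 > p1^2`; for `a0 > 0` and `a1 ≤ 0` the second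
is, because `p1 > 0` and `p2 > p1^2 ≥ 0` make `p1 - p2 a1` positive.
-/

/-- The left-hand side of the CLF design condition. -/
def clfDesignPoly (a0 a1 p1 p2 : ℝ) : ℝ :=
  4*p1^2*a0 + p1^2*a1^2 - 2*p1*p2*a0*a1 - 2*p1*a1 - 2*p2*a0 + p2^2*a0^2 + 1

theorem clfDesignPoly_eq_sq_sub (a0 a1 p1 p2 : ℝ) :
    clfDesignPoly a0 a1 p1 p2 = (p1*a1 - p2*a0 - 1)^2 - 4*a0*(p2 - p1^2) := by
  unfold clfDesignPoly; ring

theorem clfDesignPoly_eq_sq_add (a0 a1 p1 p2 : ℝ) :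
    clfDesignPoly a0 a1 p1 p2 = (p1*a1 + p2*a0 - 1)^2 + 4*(a0*p1)*(p1 - p2*a1) := by
  unfold clfDesignPoly; ring

theorem clfDesignPoly_nonneg_of_nonpos {a0 p1 p2 : ℝ} (a1 : ℝ) (ha0 : a0 ≤ 0)
    (hp : p1^2 ≤ p2) : 0 ≤ clfDesignPoly a0 a1 p1 p2 := by
  rw [clfDesignPoly_eq_sq_sub]
  exact sub_nonneg.2 <|
    (mul_nonpos_of_nonpos_of_nonneg (by linarith) (sub_nonneg.2 hp)).trans (sq_nonneg _)

theorem clfDesignPoly_nonneg_of_nonneg_of_nonpos {a0 a1 p1 p2 : ℝ} (ha0 : 0 ≤ a0) (ha1 : a1 ≤ 0)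
    (hp1 : 0 ≤ p1) (hp2 : 0 ≤ p2) : 0 ≤ clfDesignPoly a0 a1 p1 p2 := by
  rw [clfDesignPoly_eq_sq_add]
  have hp2a1 : p2*a1 ≤ 0 := mul_nonpos_of_nonneg_of_nonpos hp2 ha1
  exact add_nonneg (sq_nonneg _)
    (mul_nonneg (mul_nonneg zero_le_four (mul_nonneg ha0 hp1)) (by linarith))

theorem stmt_7 (a0 a1 : ℝ) (h : a0 ≤ 0 ∨ a1 ≤ 0) :
    ¬ ∃ p1 p2 : ℝ, p1 > 0 ∧ p2 - p1^2 > 0 ∧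
      4*p1^2*a0 + p1^2*a1^2 - 2*p1*p2*a0*a1 - 2*p1*a1 - 2*p2*a0 + p2^2*a0^2 + 1 < 0 := by
  rintro ⟨p1, p2, hp1, hp2, hlt⟩
  have hp : p1^2 ≤ p2 := by linarith
  rcases le_or_gt a0 0 with ha0 | ha0
  · exact hlt.not_ge (clfDesignPoly_nonneg_of_nonpos a1 ha0 hp)
  · exact hlt.not_ge (clfDesignPoly_nonneg_of_nonneg_of_nonpos ha0.le (h.resolve_left ha0.not_ge)
      hp1.le ((sq_nonneg p1).trans hp))
end
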